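/- arXiv:1106.2036 — 4 statements merged into one kernel-verified Lean document; each statement's English description precedes it below -/
import Mathlib

section
/- Let N > 2 and 0 ≤ k ≤ ⌊N/2⌋. The number of k-element subsets A of {0, 1, ..., N-1} such that no two cyclically consecutive elements (i.e., pairs {i, i+1} for 0 ≤ i < N-1, and the pair {0, N-1}) are both in A equals C(N-k, k) + C(N-k-1, k-1). -/
open Finset
open scoped Classical

def pathSet (n k : ℕ) : Finset (Finset ℕ) :=
  (range n).powerset.filter (fun S => S.card = k ∧ ∀ i ∈ S, i + 1 ∉ S)

lemma mem_pathSet {n k : ℕ} {S : Finset ℕ} :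
    S ∈ pathSet n k ↔ S ⊆ range n ∧ S.card = k ∧ ∀ i ∈ S, i + 1 ∉ S := by
  simp [pathSet, and_assoc]

lemma pathSet_zero_right (n : ℕ) : pathSet n 0 = {∅} := by
  ext S
  simp only [mem_pathSet, Finset.mem_singleton, Finset.card_eq_zero]
  constructor
  · rintro ⟨-, h, -⟩; exact h
  · rintro rfl; simp

lemma pathSet_rec (n k : ℕ) :
    (pathSet (n + 2) (k + 1)).card = (pathSet (n + 1) (k + 1)).card + (pathSet n k).card := by
  rw [← Finset.card_filter_add_card_filter_not
    (p := fun S => (n + 1) ∈ S) (s := pathSet (n + 2) (k + 1)), add_comm]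
  congr 1
  · -- without n+1
    congr 1
    ext S
    simp only [Finset.mem_filter, mem_pathSet, Finset.mem_range]
    constructor
    · rintro ⟨⟨hsub, hc, hind⟩, hn⟩
      refine ⟨fun x hx => ?_, hc, hind⟩
      have := hsub hx
      simp only [Finset.mem_range] at this ⊢
      rcases Nat.lt_succ_iff_lt_or_eq.mp this with h | h
      · exact h
      · exact absurd (h ▸ hx) hn
    · rintro ⟨hsub, hc, hind⟩
      refine ⟨⟨hsub.trans (range_subset_range.mpr (by omega)), hc, hind⟩, fun h => ?_⟩
      have := hsub h
      simp at this
  · -- with n+1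
    refine Finset.card_bij' (fun S _ => S.erase (n + 1)) (fun S _ => insert (n + 1) S)
      ?_ ?_ ?_ ?_
    · rintro S hS
      simp only [Finset.mem_filter, mem_pathSet] at hS
      obtain ⟨⟨hsub, hc, hind⟩, hmem⟩ := hS
      have hn : n ∉ S := fun h => hind n h hmem
      rw [mem_pathSet]
      refine ⟨fun x hx => ?_, ?_, fun i hi => ?_⟩
      · simp only [Finset.mem_erase] at hx
        have := hsub hx.2
        simp only [Finset.mem_range] at this ⊢
        rcases hx with ⟨hne, hxS⟩
        have : x ≠ n := fun h => hn (h ▸ hxS)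
        have := hsub hxS
        simp only [Finset.mem_range] at this
        omega
      · rw [Finset.card_erase_of_mem hmem, hc]; omega
      · simp only [Finset.mem_erase] at hi ⊢
        rintro ⟨-, h⟩
        exact hind i hi.2 h
    · rintro S hS
      rw [mem_pathSet] at hS
      obtain ⟨hsub, hc, hind⟩ := hS
      have hn1 : n + 1 ∉ S := fun h => by have := hsub h; simp at this
      simp only [Finset.mem_filter, mem_pathSet]
      refine ⟨⟨?_, ?_, ?_⟩, by simp⟩
      · intro x hx
        simp only [Finset.mem_insert] at hx
        rcases hx with rfl | hx
        · simp
        · have := hsub hx; simp only [Finset.mem_range] at this ⊢; omega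
      · rw [Finset.card_insert_of_notMem hn1, hc]
      · intro i hi
        simp only [Finset.mem_insert] at hi ⊢
        rintro (h | h)
        · rcases hi with rfl | hi
          · omega
          · have := hsub hi; simp only [Finset.mem_range] at this; omega
        · rcases hi with rfl | hi
          · have := hsub h; simp only [Finset.mem_range] at this; omega
          · exact hind i hi h
    · rintro S hS
      simp only [Finset.mem_filter] at hS
      exact Finset.insert_erase hS.2
    · rintro S hS
      rw [mem_pathSet] at hS
      have : n + 1 ∉ S := fun h => by have := hS.1 h; simp at this
      exact Finset.erase_insert this

lemma pathSet_card (n k : ℕ) : (pathSet n k).card = Nat.choose (n + 1 - k) k := by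
  induction n using Nat.strong_induction_on generalizing k with
  | _ n ih =>
    match n, k with
    | n, 0 => simp [pathSet_zero_right]
    | 0, (k+1) =>
      have : pathSet 0 (k+1) = ∅ := by
        ext S; simp only [mem_pathSet, Finset.notMem_empty, iff_false]
        rintro ⟨hsub, hc, -⟩
        simp only [Finset.range_zero, Finset.subset_empty] at hsub
        subst hsub; simp at hc
      simp [this]
    | 1, (k+1) =>
      have h1 : pathSet 1 (k+1) ⊆ {{0}} := by
        intro S hS
        rw [mem_pathSet] at hS
        obtain ⟨hsub, hc, -⟩ := hS
        simp only [Finset.range_one] at hsub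
        rcases Finset.subset_singleton_iff.mp hsub with rfl | rfl
        · simp at hc
        · simp
      match k with
      | 0 =>
        have : pathSet 1 1 = {{0}} := by
          apply Finset.Subset.antisymm h1
          intro S hS
          simp only [Finset.mem_singleton] at hS
          subst hS
          rw [mem_pathSet]
          refine ⟨by simp, by simp, by simp⟩
        simp [this]
      | (k+1) =>
        have : pathSet 1 (k+2) = ∅ := by
          ext S
          simp only [Finset.notMem_empty, iff_false]
          intro hS
          have := h1 hS
          simp only [Finset.mem_singleton] at this
          rw [mem_pathSet] at hS
          subst this
          simp at hS
        simp [this]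
    | (n+2), (k+1) =>
      rw [pathSet_rec, ih (n+1) (by omega) (k+1), ih n (by omega) k]
      have h2 : n + 2 + 1 - (k + 1) = n + 2 - k := by omega
      have h1 : n + 1 + 1 - (k + 1) = n + 1 - k := by omega
      rw [h1, h2]
      rcases le_or_gt k (n + 1) with h | h
      · have : n + 2 - k = (n + 1 - k) + 1 := by omega
        rw [this, Nat.choose_succ_succ, add_comm]
      · have e1 : n + 1 - k = 0 := by omega
        rw [e1, Nat.choose_eq_zero_of_lt (by omega : n + 2 - k < k + 1),
          Nat.choose_eq_zero_of_lt (by omega : (0:ℕ) < k)]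
        simp

def cycSet (N k : ℕ) : Finset (Finset ℕ) :=
  (range N).powerset.filter
    (fun S => S.card = k ∧ (∀ i ∈ S, i + 1 ∉ S) ∧ ¬(0 ∈ S ∧ N - 1 ∈ S))

lemma mem_cycSet {N k : ℕ} {S : Finset ℕ} :
    S ∈ cycSet N k ↔ S ⊆ range N ∧ S.card = k ∧ (∀ i ∈ S, i + 1 ∉ S) ∧
      ¬(0 ∈ S ∧ N - 1 ∈ S) := by
  simp [cycSet, and_assoc]

lemma cyc_without_zero (N k : ℕ) (hN : 2 < N) :
    ((cycSet N k).filter (fun S => 0 ∉ S)).card = (pathSet (N - 1) k).card := by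
  apply Finset.card_nbij' (fun S => S.image (· - 1)) (fun S => S.image (· + 1))
  · intro S hS
    simp only [Finset.mem_coe, Finset.mem_filter, mem_cycSet] at hS
    obtain ⟨⟨hsub, hc, hind, -⟩, h0⟩ := hS
    have hge : ∀ x ∈ S, 1 ≤ x := by
      intro x hx; rcases Nat.eq_zero_or_pos x with rfl | h; · exact absurd hx h0
      · exact h
    have hmemim : ∀ x, x ∈ S.image (· - 1) ↔ x + 1 ∈ S := by
      intro x
      simp only [Finset.mem_image]
      constructor
      · rintro ⟨y, hy, rfl⟩
        have := hge y hy
        have : y - 1 + 1 = y := by omega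
        rwa [this]
      · intro h; exact ⟨x + 1, h, by omega⟩
    rw [Finset.mem_coe, mem_pathSet]
    refine ⟨?_, ?_, ?_⟩
    · intro x hx
      simp only [Finset.mem_image] at hx
      obtain ⟨y, hy, rfl⟩ := hx
      have := hsub hy
      simp only [Finset.mem_range] at this ⊢
      have := hge y hy
      omega
    · rw [Finset.card_image_of_injOn, hc]
      intro a ha b hb hab
      have := hge a ha; have := hge b hb
      simp only at hab; omega
    · intro i hi hi1
      rw [hmemim] at hi hi1
      exact hind (i + 1) hi hi1
  · intro S hS
    rw [Finset.mem_coe, mem_pathSet] at hS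
    obtain ⟨hsub, hc, hind⟩ := hS
    have h0 : 0 ∉ S.image (· + 1) := by simp
    simp only [Finset.mem_coe, Finset.mem_filter, mem_cycSet]
    refine ⟨⟨?_, ?_, ?_, ?_⟩, h0⟩
    · intro x hx
      simp only [Finset.mem_image] at hx
      obtain ⟨y, hy, rfl⟩ := hx
      have := hsub hy
      simp only [Finset.mem_range] at this ⊢
      omega
    · rw [Finset.card_image_of_injective _ (add_left_injective 1), hc]
    · intro i hi hi1
      simp only [Finset.mem_image] at hi hi1
      obtain ⟨y, hy, rfl⟩ := hi
      obtain ⟨z, hz, hz1⟩ := hi1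
      have : z = y + 1 := by omega
      exact hind y hy (this ▸ hz)
    · rintro ⟨h, -⟩; exact h0 h
  · intro S hS
    simp only [Finset.mem_coe, Finset.mem_filter, mem_cycSet] at hS
    obtain ⟨⟨hsub, -, -, -⟩, h0⟩ := hS
    dsimp only
    rw [Finset.image_image]
    refine Eq.trans (Finset.image_congr ?_) Finset.image_id
    intro x hx
    simp only [Function.comp, id]
    have : x ≠ 0 := fun h => h0 (h ▸ hx)
    omega
  · intro S hS
    dsimp only
    rw [Finset.image_image]
    refine Eq.trans (Finset.image_congr ?_) Finset.image_id
    intro x hx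
    simp only [Function.comp, id]
    omega

lemma cyc_with_zero (N k : ℕ) (hN : 2 < N) :
    ((cycSet N (k + 1)).filter (fun S => 0 ∈ S)).card = (pathSet (N - 3) k).card := by
  apply Finset.card_nbij' (fun S => (S.erase 0).image (· - 2))
    (fun S => insert 0 (S.image (· + 2)))
  · intro S hS
    simp only [Finset.mem_coe, Finset.mem_filter, mem_cycSet] at hS
    obtain ⟨⟨hsub, hc, hind, hcyc⟩, h0⟩ := hS
    have h1 : 1 ∉ S := hind 0 h0
    have hN1 : N - 1 ∉ S := fun h => hcyc ⟨h0, h⟩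
    have hge : ∀ x ∈ S.erase 0, 2 ≤ x ∧ x ≤ N - 2 := by
      intro x hx
      simp only [Finset.mem_erase] at hx
      obtain ⟨hne, hxS⟩ := hx
      have hx1 : x ≠ 1 := fun h => h1 (h ▸ hxS)
      have hxN : x ≠ N - 1 := fun h => hN1 (h ▸ hxS)
      have := hsub hxS
      simp only [Finset.mem_range] at this
      omega
    have hmemim : ∀ x, x ∈ (S.erase 0).image (· - 2) ↔ x + 2 ∈ S := by
      intro x
      simp only [Finset.mem_image]
      constructor
      · rintro ⟨y, hy, rfl⟩
        have := hge y hy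
        simp only [Finset.mem_erase] at hy
        have : y - 2 + 2 = y := by omega
        rw [this]; exact hy.2
      · intro h
        refine ⟨x + 2, ?_, by omega⟩
        simp only [Finset.mem_erase]
        exact ⟨by omega, h⟩
    rw [Finset.mem_coe, mem_pathSet]
    refine ⟨?_, ?_, ?_⟩
    · intro x hx
      simp only [Finset.mem_image] at hx
      obtain ⟨y, hy, rfl⟩ := hx
      have := hge y hy
      simp only [Finset.mem_range]
      omega
    · rw [Finset.card_image_of_injOn
        (by intro a ha b hb hab; have := hge a ha; have := hge b hb;
            simp only at hab; omega),
        Finset.card_erase_of_mem h0, hc]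
      omega
    · intro i hi hi1
      rw [hmemim] at hi hi1
      exact hind (i + 2) hi (by rw [show i + 2 + 1 = i + 1 + 2 from by omega]; exact hi1)
  · intro S hS
    rw [Finset.mem_coe, mem_pathSet] at hS
    obtain ⟨hsub, hc, hind⟩ := hS
    have hlt : ∀ x ∈ S, x < N - 3 := by
      intro x hx; have := hsub hx; simpa using this
    have h0im : 0 ∉ S.image (· + 2) := by simp
    simp only [Finset.mem_coe, Finset.mem_filter, mem_cycSet]
    refine ⟨⟨?_, ?_, ?_, ?_⟩, by simp⟩
    · intro x hx
      simp only [Finset.mem_insert, Finset.mem_image] at hx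
      simp only [Finset.mem_range]
      rcases hx with rfl | ⟨y, hy, rfl⟩
      · omega
      · have := hlt y hy; omega
    · rw [Finset.card_insert_of_notMem h0im,
        Finset.card_image_of_injective _ (add_left_injective 2), hc]
    · intro i hi hi1
      simp only [Finset.mem_insert, Finset.mem_image] at hi hi1
      rcases hi1 with h | ⟨z, hz, hz1⟩
      · omega
      · rcases hi with rfl | ⟨y, hy, rfl⟩
        · omega
        · have : z = y + 1 := by omega
          exact hind y hy (this ▸ hz)
    · rintro ⟨-, hB⟩
      simp only [Finset.mem_insert, Finset.mem_image] at hB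
      rcases hB with h | ⟨y, hy, hy2⟩
      · omega
      · have := hlt y hy; omega
  · intro S hS
    simp only [Finset.mem_coe, Finset.mem_filter, mem_cycSet] at hS
    obtain ⟨⟨hsub, hc, hind, hcyc⟩, h0⟩ := hS
    have h1 : 1 ∉ S := hind 0 h0
    have hN1 : N - 1 ∉ S := fun h => hcyc ⟨h0, h⟩
    dsimp only
    rw [Finset.image_image]
    have : Finset.image ((· + 2) ∘ (· - 2)) (S.erase 0) = S.erase 0 := by
      refine Eq.trans (Finset.image_congr ?_) Finset.image_id
      intro x hx
      simp only [Finset.coe_erase, Set.mem_diff, Set.mem_singleton_iff,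
        Finset.mem_coe] at hx
      obtain ⟨hxS, hne⟩ := hx
      have hx1 : x ≠ 1 := fun h => h1 (h ▸ hxS)
      simp only [Function.comp, id]
      omega
    rw [this, Finset.insert_erase h0]
  · intro S hS
    rw [Finset.mem_coe, mem_pathSet] at hS
    have h0im : 0 ∉ S.image (· + 2) := by simp
    dsimp only
    rw [Finset.erase_insert h0im, Finset.image_image]
    refine Eq.trans (Finset.image_congr ?_) Finset.image_id
    intro x hx
    simp only [Function.comp, id]
    omega

lemma cycSet_zero (N : ℕ) : cycSet N 0 = {∅} := by
  ext S
  simp only [mem_cycSet, Finset.mem_singleton, Finset.card_eq_zero]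
  constructor
  · rintro ⟨-, h, -⟩; exact h
  · rintro rfl; simp

lemma cycSet_card (N k : ℕ) (hN : 2 < N) :
    (cycSet N k).card
      = (pathSet (N - 1) k).card
        + (if k = 0 then 0 else (pathSet (N - 3) (k - 1)).card) := by
  match k with
  | 0 =>
    simp only [if_pos rfl, add_zero, cycSet_zero]
    have : pathSet (N - 1) 0 = {∅} := by
      ext S
      simp only [mem_pathSet, Finset.mem_singleton, Finset.card_eq_zero]
      constructor
      · rintro ⟨-, h, -⟩; exact h
      · rintro rfl; simp
    simp [this]
  | (k + 1) =>
    rw [← Finset.card_filter_add_card_filter_not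
      (p := fun S => 0 ∈ S) (s := cycSet N (k + 1))]
    rw [if_neg (by omega : ¬(k + 1 = 0)), Nat.add_sub_cancel]
    rw [cyc_with_zero N k hN, cyc_without_zero N (k + 1) hN, add_comm]

open scoped Classical in
lemma zmod_bridge (N k : ℕ) [NeZero N] (hN : 2 < N) :
    (Finset.univ.filter (fun A : Finset (ZMod N) =>
        A.card = k ∧ ∀ i : ZMod N, ¬(i ∈ A ∧ i + 1 ∈ A))).card = (cycSet N k).card := by
  apply Finset.card_nbij' (fun A => A.image ZMod.val)
    (fun S => S.image (Nat.cast : ℕ → ZMod N))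
  · intro A hA
    simp only [Finset.mem_coe, Finset.mem_filter, Finset.mem_univ, true_and] at hA
    obtain ⟨hc, hind⟩ := hA
    rw [Finset.mem_coe, mem_cycSet]
    refine ⟨?_, ?_, ?_, ?_⟩
    · intro x hx
      simp only [Finset.mem_image] at hx
      obtain ⟨a, ha, rfl⟩ := hx
      simp only [Finset.mem_range]
      exact ZMod.val_lt a
    · rw [Finset.card_image_of_injective _ (ZMod.val_injective N), hc]
    · intro i hi hi1
      simp only [Finset.mem_image] at hi hi1
      obtain ⟨a, ha, rfl⟩ := hi
      obtain ⟨b, hb, hba⟩ := hi1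
      have hb2 : b = a + 1 := by
        have h1 : ((b.val : ℕ) : ZMod N) = b := ZMod.natCast_rightInverse b
        have h2 : ((a.val : ℕ) : ZMod N) = a := ZMod.natCast_rightInverse a
        rw [← h1, hba]
        push_cast
        rw [h2]
      exact hind a ⟨ha, hb2 ▸ hb⟩
    · rintro ⟨h0, hN1⟩
      simp only [Finset.mem_image] at h0 hN1
      obtain ⟨a, ha, ha0⟩ := h0
      obtain ⟨b, hb, hbN⟩ := hN1
      have ha' : a = 0 := by
        have := ZMod.natCast_rightInverse (n := N) a
        rw [← this, ha0]; simp
      have hb1 : b + 1 = 0 := by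
        have := ZMod.natCast_rightInverse (n := N) b
        rw [← this, hbN]
        have : ((N - 1 : ℕ) : ZMod N) + 1 = ((N - 1 + 1 : ℕ) : ZMod N) := by push_cast; ring
        rw [this, Nat.sub_add_cancel (by omega)]
        simp
      exact hind b ⟨hb, by rw [hb1, ← ha']; exact ha⟩
  · intro S hS
    rw [Finset.mem_coe, mem_cycSet] at hS
    obtain ⟨hsub, hc, hind, hcyc⟩ := hS
    have hlt : ∀ x ∈ S, x < N := by intro x hx; simpa using hsub hx
    have hinj : Set.InjOn (Nat.cast : ℕ → ZMod N) S := by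
      intro a ha b hb hab
      have := ZMod.val_cast_of_lt (hlt a ha)
      have := ZMod.val_cast_of_lt (hlt b hb)
      rw [← ZMod.val_cast_of_lt (hlt a ha), ← ZMod.val_cast_of_lt (hlt b hb), hab]
    simp only [Finset.mem_coe, Finset.mem_filter, Finset.mem_univ, true_and]
    refine ⟨by rw [Finset.card_image_of_injOn hinj, hc], ?_⟩
    rintro i ⟨hi, hi1⟩
    simp only [Finset.mem_image] at hi hi1
    obtain ⟨x, hx, rfl⟩ := hi
    obtain ⟨y, hy, hyx⟩ := hi1
    rcases Nat.lt_or_ge (x + 1) N with h | h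
    · have : (↑x : ZMod N) + 1 = ((x + 1 : ℕ) : ZMod N) := by push_cast; ring
      rw [this] at hyx
      have : y = x + 1 := by
        rw [← ZMod.val_cast_of_lt (hlt y hy), ← ZMod.val_cast_of_lt h, hyx]
      exact hind x hx (this ▸ hy)
    · have hx1 : x = N - 1 := by have := hlt x hx; omega
      have : (↑x : ZMod N) + 1 = 0 := by
        rw [hx1]
        have : ((N - 1 : ℕ) : ZMod N) + 1 = ((N - 1 + 1 : ℕ) : ZMod N) := by push_cast; ring
        rw [this, Nat.sub_add_cancel (by omega)]
        simp
      rw [this] at hyx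
      have hy0 : y = 0 := by
        rw [← ZMod.val_cast_of_lt (hlt y hy), hyx, ZMod.val_zero]
      exact hcyc ⟨hy0 ▸ hy, hx1 ▸ hx⟩
  · intro A hA
    dsimp only
    rw [Finset.image_image]
    refine Eq.trans (Finset.image_congr ?_) Finset.image_id
    intro a ha
    simp only [Function.comp, id]
    exact ZMod.natCast_rightInverse a
  · intro S hS
    rw [Finset.mem_coe, mem_cycSet] at hS
    obtain ⟨hsub, -, -, -⟩ := hS
    dsimp only
    rw [Finset.image_image]
    refine Eq.trans (Finset.image_congr ?_) Finset.image_id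
    intro x hx
    simp only [Function.comp, id]
    exact ZMod.val_cast_of_lt (by simpa using hsub hx)


theorem stmt0 (N k : ℕ) [NeZero N] (hN : 2 < N) (hk : k ≤ N / 2) :
    (Finset.univ.filter (fun A : Finset (ZMod N) =>
        A.card = k ∧ ∀ i : ZMod N, ¬(i ∈ A ∧ i + 1 ∈ A))).card
      = Nat.choose (N - k) k
        + (if k = 0 then 0 else Nat.choose (N - k - 1) (k - 1)) := by
  rw [zmod_bridge N k hN, cycSet_card N k hN, pathSet_card]
  match k with
  | 0 =>
    rw [if_pos rfl, if_pos rfl, add_zero, add_zero]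
    congr 1
    omega
  | (k + 1) =>
    rw [if_neg (by omega : ¬(k + 1 = 0)), if_neg (by omega : ¬(k + 1 = 0)),
      Nat.add_sub_cancel, pathSet_card]
    congr 2 <;> omega
end

section
/- Define Z^(N) = Σ_{k=0}^{⌊N/2⌋} [C(N-k,k) + C(N-k-1,k-1)] · p^k · (1-p)^{N-2k} for a real (or complex) parameter p. Then for all N > 2, Z^(N) = 1 + (-p)^N. -/
noncomputable def Saux (p : ℝ) (N : ℕ) : ℝ :=
  ∑ k ∈ Finset.range (N / 2 + 1),
    ((Nat.choose (N - k) k : ℝ)) * p ^ k * (1 - p) ^ (N - 2 * k)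

lemma Saux_zero (p : ℝ) : Saux p 0 = 1 := by simp [Saux]

lemma Saux_one (p : ℝ) : Saux p 1 = 1 - p := by simp [Saux]

lemma Saux_rec (p : ℝ) (N : ℕ) :
    Saux p (N + 2) = (1 - p) * Saux p (N + 1) + p * Saux p N := by
  have h1 : Saux p (N + 2) = (1 - p) ^ (N + 2) +
      ∑ k ∈ Finset.range (N / 2 + 1),
        (((N - k).choose k : ℝ) + ((N - k).choose (k + 1) : ℝ)) * p ^ (k + 1)
          * (1 - p) ^ (N - 2 * k) := by
    unfold Saux
    rw [show (N + 2) / 2 + 1 = (N / 2 + 1) + 1 by omega, Finset.sum_range_succ']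
    rw [add_comm]
    congr 1
    · simp
    · apply Finset.sum_congr rfl
      intro k hk
      rw [Finset.mem_range] at hk
      have e1 : N + 2 - (k + 1) = (N - k) + 1 := by omega
      have e2 : N + 2 - 2 * (k + 1) = N - 2 * k := by omega
      rw [e1, e2, Nat.choose_succ_succ]
      push_cast
      ring
  have h2 : ∑ k ∈ Finset.range (N / 2 + 1),
        (((N - k).choose k : ℝ) + ((N - k).choose (k + 1) : ℝ)) * p ^ (k + 1)
          * (1 - p) ^ (N - 2 * k)
      = p * Saux p N + ∑ k ∈ Finset.range (N / 2 + 1),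
          ((N - k).choose (k + 1) : ℝ) * p ^ (k + 1) * (1 - p) ^ (N - 2 * k) := by
    unfold Saux
    rw [Finset.mul_sum, ← Finset.sum_add_distrib]
    apply Finset.sum_congr rfl
    intro k _
    ring
  have h3 : (1 - p) * Saux p (N + 1) = (1 - p) ^ (N + 2) +
      ∑ k ∈ Finset.range (N / 2 + 1),
        ((N - k).choose (k + 1) : ℝ) * p ^ (k + 1) * (1 - p) ^ (N - 2 * k) := by
    unfold Saux
    rw [Finset.mul_sum]
    have hg : ∑ j ∈ Finset.range ((N + 1) / 2 + 1),
          (1 - p) * (((N + 1 - j).choose j : ℝ) * p ^ j * (1 - p) ^ (N + 1 - 2 * j))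
        = ∑ j ∈ Finset.range ((N + 1) / 2 + 1),
          ((N + 1 - j).choose j : ℝ) * p ^ j * (1 - p) ^ (N + 2 - 2 * j) := by
      apply Finset.sum_congr rfl
      intro j hj
      rw [Finset.mem_range] at hj
      rw [show N + 2 - 2 * j = (N + 1 - 2 * j) + 1 by omega, pow_succ]
      ring
    rw [hg]
    have hsub : ∑ j ∈ Finset.range ((N + 1) / 2 + 1),
          ((N + 1 - j).choose j : ℝ) * p ^ j * (1 - p) ^ (N + 2 - 2 * j)
        = ∑ j ∈ Finset.range ((N / 2 + 1) + 1),
          ((N + 1 - j).choose j : ℝ) * p ^ j * (1 - p) ^ (N + 2 - 2 * j) := by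
      apply Finset.sum_subset
      · apply Finset.range_subset_range.2; omega
      · intro j hj hnj
        rw [Finset.mem_range] at hj
        rw [Finset.mem_range] at hnj
        have hlt : N + 1 - j < j := by omega
        rw [Nat.choose_eq_zero_of_lt hlt]
        simp
    rw [hsub, Finset.sum_range_succ']
    rw [add_comm]
    congr 1
    · simp
    · apply Finset.sum_congr rfl
      intro k hk
      rw [show N + 1 - (k + 1) = N - k by omega,
        show N + 2 - 2 * (k + 1) = N - 2 * k by omega]
  rw [h1, h2, h3]
  ring

lemma Saux_closed (p : ℝ) (N : ℕ) :
    Saux p N = ∑ i ∈ Finset.range (N + 1), (-p) ^ i := by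
  have key : ∀ M : ℕ, Saux p M = (∑ i ∈ Finset.range (M + 1), (-p) ^ i) ∧
      Saux p (M + 1) = ∑ i ∈ Finset.range (M + 2), (-p) ^ i := by
    intro M
    induction M with
    | zero =>
      constructor
      · simpa using Saux_zero p
      · rw [Saux_one p, Finset.sum_range_succ, Finset.sum_range_one]
        ring
    | succ n ih =>
      refine ⟨ih.2, ?_⟩
      rw [Saux_rec, ih.1, ih.2]
      rw [Finset.sum_range_succ (n := n + 2), Finset.sum_range_succ (n := n + 1)]
      ring
  exact (key N).1

theorem stmt2 (p : ℝ) (N : ℕ) (hN : 2 < N) :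
    ∑ k ∈ Finset.range (N / 2 + 1),
        ((Nat.choose (N - k) k
          + if k = 0 then 0 else Nat.choose (N - k - 1) (k - 1) : ℕ) : ℝ)
          * p ^ k * (1 - p) ^ (N - 2 * k)
      = 1 + (-p) ^ N := by
  obtain ⟨n, rfl⟩ : ∃ n, N = n + 3 := ⟨N - 3, by omega⟩
  have hsplit : ∑ k ∈ Finset.range ((n + 3) / 2 + 1),
        ((Nat.choose (n + 3 - k) k
          + if k = 0 then 0 else Nat.choose (n + 3 - k - 1) (k - 1) : ℕ) : ℝ)
          * p ^ k * (1 - p) ^ (n + 3 - 2 * k)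
      = Saux p (n + 3) + p * Saux p (n + 1) := by
    have e1 : ∀ k ∈ Finset.range ((n + 3) / 2 + 1),
        ((Nat.choose (n + 3 - k) k
          + if k = 0 then 0 else Nat.choose (n + 3 - k - 1) (k - 1) : ℕ) : ℝ)
          * p ^ k * (1 - p) ^ (n + 3 - 2 * k)
        = ((n + 3 - k).choose k : ℝ) * p ^ k * (1 - p) ^ (n + 3 - 2 * k)
          + ((if k = 0 then (0:ℝ) else ((n + 3 - k - 1).choose (k - 1) : ℝ)))
            * p ^ k * (1 - p) ^ (n + 3 - 2 * k) := by
      intro k _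
      split_ifs with h
      · push_cast; ring
      · push_cast; ring
    rw [Finset.sum_congr rfl e1, Finset.sum_add_distrib]
    congr 1
    rw [Finset.sum_range_succ']
    have hz : (if (0:ℕ) = 0 then (0:ℝ) else ((n + 3 - 0 - 1).choose (0 - 1) : ℝ))
        * p ^ 0 * (1 - p) ^ (n + 3 - 2 * 0) = 0 := by simp
    rw [hz, add_zero]
    unfold Saux
    rw [Finset.mul_sum]
    rw [show (n + 3) / 2 = (n + 1) / 2 + 1 by omega]
    apply Finset.sum_congr rfl
    intro k hk
    rw [Finset.mem_range] at hk
    rw [if_neg (by omega : ¬ (k + 1 = 0))]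
    rw [show n + 3 - (k + 1) - 1 = n + 1 - k by omega,
      show k + 1 - 1 = k by omega,
      show n + 3 - 2 * (k + 1) = n + 1 - 2 * k by omega]
    ring
  rw [hsplit, Saux_closed, Saux_closed]
  have hp : ∀ k : ℕ, p * (-p) ^ k = -((-p) ^ (k + 1)) := by
    intro k; rw [pow_succ]; ring
  rw [Finset.mul_sum]
  rw [Finset.sum_congr rfl (fun k _ => hp k)]
  rw [Finset.sum_range_succ' (fun i => (-p) ^ i) (n + 3)]
  rw [show n + 3 = (n + 2) + 1 from rfl, Finset.sum_range_succ (fun k => (-p) ^ (k + 1)) (n + 2)]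
  simp only [pow_zero]
  have h0 : ∑ x ∈ Finset.range (n + 2), (-p) ^ (x + 1)
      + ∑ k ∈ Finset.range (n + 1 + 1), -(-p) ^ (k + 1) = 0 := by
    rw [show n + 1 + 1 = n + 2 from rfl, ← Finset.sum_add_distrib]
    simp
  linarith
end

section
/- For the formal power series F(x) = Σ_{N≥0} Z^(N) x^N where Z^(N) = Σ_{k=0}^{⌊N/2⌋} N_k p^k (1-p)^{N-2k} and N_k = C(N-k,k) + C(N-k-1,k-1) (with C(-1,-1)=0), one has F(x) = (1 + p x²) / (1 - x + p x - p x²). -/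
open PowerSeries

noncomputable def Zseq (p : ℝ) (N : ℕ) : ℝ :=
  ∑ k ∈ Finset.range (N / 2 + 1),
    ((Nat.choose (N - k) k
      + if k = 0 then 0 else Nat.choose (N - k - 1) (k - 1) : ℕ) : ℝ)
      * p ^ k * (1 - p) ^ (N - 2 * k)

def aa (N k : ℕ) : ℕ :=
  Nat.choose (N - k) k + if k = 0 then 0 else Nat.choose (N - k - 1) (k - 1)

lemma Zseq_eq (p : ℝ) (N : ℕ) :
    Zseq p N = ∑ k ∈ Finset.range (N / 2 + 1),
      (aa N k : ℝ) * p ^ k * (1 - p) ^ (N - 2 * k) := rfl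

lemma akey (n k : ℕ) (hk : 2 * k ≤ n + 3) :
    aa (n+3) k = aa (n+2) k + if k = 0 then 0 else aa (n+1) (k-1) := by
  match k with
  | 0 => simp [aa]
  | 1 => simp [aa, Nat.choose_one_right]
  | (j+2) =>
    obtain ⟨m, rfl⟩ : ∃ m, n = 2*j+1+m := ⟨n - (2*j+1), by omega⟩
    have f5 : j+2-1 = j+1 := rfl
    have f1 : 2*j+1+m+3-(j+2) = j+m+1+1 := by omega
    have f2 : j+m+1+1-1 = j+m+1 := by omega
    have f3 : 2*j+1+m+2-(j+2) = j+m+1 := by omega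
    have f4 : j+m+1-1 = j+m := by omega
    have f6 : 2*j+1+m+1-(j+1) = j+m+1 := by omega
    have f7 : j+1-1 = j := rfl
    simp only [aa, f5, f1, f2, f3, f4, f6, f7,
      if_neg (by omega : ¬ j+2 = 0), if_neg (by omega : ¬ j+1 = 0)]
    have p1 : (j+m+1+1).choose (j+2) = (j+m+1).choose (j+1) + (j+m+1).choose (j+2) :=
      Nat.choose_succ_succ' _ _
    have p2 : (j+m+1).choose (j+1) = (j+m).choose j + (j+m).choose (j+1) :=
      Nat.choose_succ_succ' _ _
    omega

lemma rec3 (p : ℝ) (n : ℕ) :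
    Zseq p (n+3) = (1-p) * Zseq p (n+2) + p * Zseq p (n+1) := by
  have hA : (1-p) * Zseq p (n+2)
      = ∑ k ∈ Finset.range ((n+3)/2+1),
          (aa (n+2) k : ℝ) * p ^ k * (1-p) ^ (n+3-2*k) := by
    have hpad : ∑ k ∈ Finset.range ((n+2)/2+1),
          (aa (n+2) k : ℝ) * p ^ k * (1-p) ^ (n+3-2*k)
        = ∑ k ∈ Finset.range ((n+3)/2+1),
          (aa (n+2) k : ℝ) * p ^ k * (1-p) ^ (n+3-2*k) := by
      refine Finset.sum_subset (Finset.range_subset_range.2 (by omega)) ?_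
      intro k hk1 hk2
      simp only [Finset.mem_range] at hk1 hk2
      have h1 : n+2-k < k := by omega
      have h2 : n+2-k-1 < k-1 := by omega
      simp [aa, Nat.choose_eq_zero_of_lt h1, Nat.choose_eq_zero_of_lt h2,
        if_neg (by omega : ¬ k = 0)]
    rw [Zseq_eq, Finset.mul_sum, ← hpad]
    refine Finset.sum_congr rfl ?_
    intro k hk
    simp only [Finset.mem_range] at hk
    have h2 : n+3-2*k = (n+2-2*k)+1 := by omega
    rw [h2, pow_succ]; ring
  have hB : p * Zseq p (n+1)
      = ∑ k ∈ Finset.range ((n+3)/2+1),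
          (if k = 0 then 0 else (aa (n+1) (k-1) : ℝ)) * p ^ k * (1-p) ^ (n+3-2*k) := by
    have hM : (n+3)/2+1 = ((n+1)/2+1)+1 := by omega
    rw [hM, Finset.sum_range_succ']
    simp only [if_pos rfl, if_neg (Nat.succ_ne_zero _), Nat.add_sub_cancel]
    rw [Zseq_eq, Finset.mul_sum]
    have : ∀ k ∈ Finset.range ((n+1)/2+1),
        p * ((aa (n+1) k : ℝ) * p ^ k * (1-p) ^ (n+1-2*k))
        = (aa (n+1) k : ℝ) * p ^ (k+1) * (1-p) ^ (n+3-2*(k+1)) := by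
      intro k hk
      have h2 : n+3-2*(k+1) = n+1-2*k := by omega
      rw [h2, pow_succ]; ring
    rw [Finset.sum_congr rfl this]
    simp
  rw [hA, hB, Zseq_eq, ← Finset.sum_add_distrib]
  refine Finset.sum_congr rfl ?_
  intro k hk
  simp only [Finset.mem_range] at hk
  rw [show aa (n+3) k = aa (n+2) k + if k = 0 then 0 else aa (n+1) (k-1) from
    akey n k (by omega)]
  push_cast
  split_ifs <;> ring

lemma Z0 (p : ℝ) : Zseq p 0 = 1 := by simp [Zseq]

lemma Z1 (p : ℝ) : Zseq p 1 = 1 - p := by simp [Zseq]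

lemma Z2 (p : ℝ) : Zseq p 2 = 1 + p^2 := by
  simp [Zseq, Finset.sum_range_succ]
  ring

theorem stmt3 (p : ℝ) :
    (PowerSeries.mk (Zseq p))
        * (1 - X + C p * X - C p * X ^ 2)
      = 1 + C p * X ^ 2 := by
  have hD : (PowerSeries.mk (Zseq p)) * (1 - X + C p * X - C p * X ^ 2)
      = (PowerSeries.mk (Zseq p)) - (PowerSeries.mk (Zseq p)) * X
        + C p * ((PowerSeries.mk (Zseq p)) * X)
        - C p * ((PowerSeries.mk (Zseq p)) * X * X) := by ring
  rw [hD]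
  ext n
  rcases n with _|_|_|n
  · simp [Z0]
  · simp [coeff_succ_mul_X, Z0, Z1, coeff_C_mul, coeff_X_pow]
  · simp [coeff_succ_mul_X, Z0, Z1, Z2, coeff_C_mul, coeff_X_pow]
    ring
  · simp [coeff_succ_mul_X, coeff_C_mul, coeff_X_pow, coeff_one]
    have := rec3 p n
    ring_nf
    ring_nf at this
    linarith
end

section
/- Let N and j be positive integers with j < N, let g = gcd(N, j), and suppose N/g > 2. Then the partition function Z^(N,j) := Σ over all sets of pairwise non-incident 'transpositions' {i, i+j mod N} of p^(number of transpositions) (1-p)^(N - 2·number of transpositions) equals (1 + (-p)^(N/g))^g. -/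
open scoped Classical
open Finset

noncomputable def Apath (p : ℝ) (n : ℕ) : ℝ :=
  ∑ M ∈ (range n).powerset.filter (fun M => ∀ i ∈ M, i + 1 ∉ M),
    p ^ M.card * (1 - p) ^ (n + 1 - 2 * M.card)

lemma nonconsec_card_le {n : ℕ} {M : Finset ℕ} (hM : M ⊆ range n)
    (h : ∀ i ∈ M, i + 1 ∉ M) : 2 * M.card ≤ n + 1 := by
  have hdisj : Disjoint M (M.image (· + 1)) := by
    rw [Finset.disjoint_right]
    rintro x hx hxM
    obtain ⟨m, hm, rfl⟩ := mem_image.mp hx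
    exact h m hm hxM
  have hsub : M ∪ M.image (· + 1) ⊆ range (n + 1) := by
    intro x hx
    rcases mem_union.mp hx with hx | hx
    · exact mem_range.mpr (Nat.lt_succ_of_lt (mem_range.mp (hM hx)))
    · obtain ⟨m, hm, rfl⟩ := mem_image.mp hx
      exact mem_range.mpr (Nat.succ_lt_succ (mem_range.mp (hM hm)))
  have h1 := card_le_card hsub
  rw [card_union_of_disjoint hdisj, card_image_of_injective _ (add_left_injective 1),
    card_range] at h1
  omega

lemma Apath_zero (p : ℝ) : Apath p 0 = 1 - p := by
  have h : (range 0).powerset.filter (fun M => ∀ i ∈ M, i + 1 ∉ M) = {∅} := by decide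
  rw [Apath, h, sum_singleton]
  simp

lemma Apath_one (p : ℝ) : Apath p 1 = (1 - p) ^ 2 + p := by
  have h : (range 1).powerset.filter (fun M => ∀ i ∈ M, i + 1 ∉ M) = {∅, {0}} := by decide
  rw [Apath, h]
  rw [Finset.sum_insert (by decide), Finset.sum_singleton]
  norm_num

lemma Apath_succ_succ (p : ℝ) (n : ℕ) :
    Apath p (n + 2) = (1 - p) * Apath p (n + 1) + p * Apath p n := by
  classical
  have hsplit := Finset.sum_filter_add_sum_filter_not
      ((range (n+2)).powerset.filter (fun M => ∀ i ∈ M, i + 1 ∉ M))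
      (fun M => n + 1 ∈ M)
      (fun M => p ^ M.card * (1 - p) ^ (n + 3 - 2 * M.card))
  rw [Apath, ← hsplit, add_comm]
  congr 1
  · -- n+1 ∉ M part = (1-p) * Apath p (n+1)
    rw [Apath, Finset.mul_sum]
    have hset : ((range (n+2)).powerset.filter (fun M => ∀ i ∈ M, i + 1 ∉ M)).filter
        (fun M => ¬ n + 1 ∈ M) = (range (n+1)).powerset.filter (fun M => ∀ i ∈ M, i + 1 ∉ M) := by
      ext M
      simp only [mem_filter, mem_powerset]
      constructor
      · rintro ⟨⟨hsub, hnc⟩, hmem⟩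
        refine ⟨fun x hx => ?_, hnc⟩
        have h1 := mem_range.mp (hsub hx)
        rw [mem_range]
        rcases Nat.lt_or_ge x (n+1) with h | h
        · exact h
        · exfalso; apply hmem
          have hx2 : x = n + 1 := by omega
          rwa [← hx2]
      · rintro ⟨hsub, hnc⟩
        have hmem : n + 1 ∉ M := fun hc => by have := mem_range.mp (hsub hc); omega
        exact ⟨⟨fun x hx => mem_range.mpr (by have := mem_range.mp (hsub hx); omega), hnc⟩, hmem⟩
    rw [hset]
    apply Finset.sum_congr rfl
    intro M hM
    simp only [mem_filter, mem_powerset] at hM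
    have hle : 2 * M.card ≤ n + 2 := nonconsec_card_le hM.1 hM.2
    rw [show n + 3 - 2 * M.card = (n + 2 - 2 * M.card) + 1 by omega, pow_succ]
    ring
  · -- n+1 ∈ M part = p * Apath p n
    rw [Apath, Finset.mul_sum]
    apply Finset.sum_nbij' (fun M => M.erase (n+1)) (fun M => insert (n+1) M)
    · intro M hM
      simp only [mem_filter, mem_powerset] at hM ⊢
      obtain ⟨⟨hsub, hnc⟩, hmem⟩ := hM
      constructor
      · intro x hx
        have hxM := mem_of_mem_erase hx
        have hxne := ne_of_mem_erase hx
        have hlt := mem_range.mp (hsub hxM)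
        have hxn : x ≠ n := by
          rintro rfl
          exact hnc x hxM hmem
        rw [mem_range]; omega
      · intro i hi
        exact fun hc => hnc i (mem_of_mem_erase hi) (mem_erase.mp hc).2
    · intro M hM
      simp only [mem_filter, mem_powerset] at hM ⊢
      obtain ⟨hsub, hnc⟩ := hM
      refine ⟨⟨?_, ?_⟩, mem_insert_self _ _⟩
      · intro x hx
        rcases mem_insert.mp hx with rfl | hx
        · exact mem_range.mpr (by omega)
        · have := mem_range.mp (hsub hx); exact mem_range.mpr (by omega)
      · intro i hi hc
        rcases mem_insert.mp hi with rfl | hi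
        · rcases mem_insert.mp hc with h | h
          · omega
          · have := mem_range.mp (hsub h); omega
        · rcases mem_insert.mp hc with h | h
          · have := mem_range.mp (hsub hi); omega
          · exact hnc i hi h
    · intro M hM
      simp only [mem_filter] at hM
      exact insert_erase hM.2
    · intro M hM
      simp only [mem_filter, mem_powerset] at hM
      apply erase_insert
      intro hc
      have := mem_range.mp (hM.1 hc); omega
    · intro M hM
      simp only [mem_filter, mem_powerset] at hM
      obtain ⟨⟨hsub, hnc⟩, hmem⟩ := hM
      rw [card_erase_of_mem hmem]
      have hcard : 1 ≤ M.card := card_pos.mpr ⟨_, hmem⟩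
      have hle : 2 * M.card ≤ n + 3 := nonconsec_card_le hsub hnc
      obtain ⟨k, hk⟩ : ∃ k, M.card = k + 1 := ⟨M.card - 1, by omega⟩
      rw [hk]
      rw [show k + 1 - 1 = k by omega, show n + 3 - 2 * (k+1) = n + 1 - 2 * k by omega,
        pow_succ]
      ring

lemma nonconsec_card_le' {n : ℕ} {M : Finset ℕ} (hM : M ⊆ range n)
    (h : ∀ i ∈ M, i + 1 ∉ M) (h0 : 0 ∉ M) : 2 * M.card ≤ n := by
  have hdisj : Disjoint M (M.image (· + 1)) := by
    rw [Finset.disjoint_right]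
    rintro x hx hxM
    obtain ⟨a, ha, rfl⟩ := mem_image.mp hx
    exact h a ha hxM
  have hsub : M ∪ M.image (· + 1) ⊆ (range (n + 1)).erase 0 := by
    intro x hx
    rcases mem_union.mp hx with hx | hx
    · refine mem_erase.mpr ⟨fun hc => h0 (hc ▸ hx), mem_range.mpr ?_⟩
      exact Nat.lt_succ_of_lt (mem_range.mp (hM hx))
    · obtain ⟨a, ha, rfl⟩ := mem_image.mp hx
      exact mem_erase.mpr ⟨by omega, mem_range.mpr (Nat.succ_lt_succ (mem_range.mp (hM ha)))⟩
  have h1 := card_le_card hsub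
  rw [card_union_of_disjoint hdisj, card_image_of_injective _ (add_left_injective 1),
    card_erase_of_mem (mem_range.mpr (Nat.succ_pos n)), card_range] at h1
  omega

lemma image_sub_add {S : Finset ℕ} (h0 : ∀ x ∈ S, 1 ≤ x) :
    (S.image (· - 1)).image (· + 1) = S := by
  rw [Finset.image_image]
  have : ∀ x ∈ S, ((· + 1) ∘ (· - 1)) x = id x := by
    intro x hx; have := h0 x hx; simp; omega
  rw [Finset.image_congr this, Finset.image_id]

lemma image_add_sub (S : Finset ℕ) : (S.image (· + 1)).image (· - 1) = S := by
  rw [Finset.image_image]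
  have : ∀ x ∈ S, ((· - 1) ∘ (· + 1)) x = id x := by
    intro x hx; simp
  rw [Finset.image_congr this, Finset.image_id]

noncomputable def Ccyc (p : ℝ) (n : ℕ) : ℝ :=
  ∑ M ∈ (range n).powerset.filter
      (fun M => (∀ i ∈ M, i + 1 ∉ M) ∧ (n - 1 ∈ M → 0 ∉ M)),
    p ^ M.card * (1 - p) ^ (n - 2 * M.card)

lemma Ccyc_eq (p : ℝ) (m : ℕ) :
    Ccyc p (m + 3) = Apath p (m + 2) + p * Apath p m := by
  classical
  have hsplit := Finset.sum_filter_add_sum_filter_not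
      ((range (m+3)).powerset.filter
        (fun M => (∀ i ∈ M, i + 1 ∉ M) ∧ (m + 3 - 1 ∈ M → 0 ∉ M)))
      (fun M => m + 2 ∈ M)
      (fun M => p ^ M.card * (1 - p) ^ (m + 3 - 2 * M.card))
  rw [Ccyc, ← hsplit, add_comm]
  congr 1
  · -- m+2 ∉ M part = Apath p (m+2)
    rw [Apath]
    have hset : ((range (m+3)).powerset.filter
        (fun M => (∀ i ∈ M, i + 1 ∉ M) ∧ (m + 3 - 1 ∈ M → 0 ∉ M))).filter
        (fun M => ¬ m + 2 ∈ M)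
        = (range (m+2)).powerset.filter (fun M => ∀ i ∈ M, i + 1 ∉ M) := by
      ext M
      simp only [mem_filter, mem_powerset]
      constructor
      · rintro ⟨⟨hsub, hnc, _⟩, hmem⟩
        refine ⟨fun x hx => ?_, hnc⟩
        have h1 := mem_range.mp (hsub hx)
        rw [mem_range]
        by_contra h
        have hx2 : x = m + 2 := by omega
        exact hmem (hx2 ▸ hx)
      · rintro ⟨hsub, hnc⟩
        have hmem : m + 2 ∉ M := fun hc => by have := mem_range.mp (hsub hc); omega
        refine ⟨⟨fun x hx => mem_range.mpr (by have := mem_range.mp (hsub hx); omega),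
          hnc, ?_⟩, hmem⟩
        intro h
        exact absurd h (by simpa using hmem)
    rw [hset]
  · -- m+2 ∈ M part = p * Apath p m
    rw [Apath, Finset.mul_sum]
    apply Finset.sum_nbij' (fun M => (M.erase (m+2)).image (· - 1))
      (fun M => insert (m+2) (M.image (· + 1)))
    · -- forward maps into target
      intro M hM
      simp only [mem_filter, mem_powerset] at hM ⊢
      obtain ⟨⟨hsub, hnc, hwrap⟩, hmem⟩ := hM
      have h0 : (0:ℕ) ∉ M := hwrap (by simpa using hmem)
      have hm1 : m + 1 ∉ M := fun hc => hnc _ hc hmem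
      have helt : ∀ x ∈ M.erase (m+2), 1 ≤ x ∧ x ≤ m := by
        intro x hx
        have hxM := mem_of_mem_erase hx
        have hxne := ne_of_mem_erase hx
        have hlt := mem_range.mp (hsub hxM)
        have hx0 : x ≠ 0 := fun h => h0 (h ▸ hxM)
        have hxm1 : x ≠ m + 1 := fun h => hm1 (h ▸ hxM)
        omega
      constructor
      · intro y hy
        obtain ⟨x, hx, rfl⟩ := mem_image.mp hy
        have := helt x hx
        rw [mem_range]; omega
      · intro i hi hc
        obtain ⟨x, hx, rfl⟩ := mem_image.mp hi
        obtain ⟨x', hx', hx'e⟩ := mem_image.mp hc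
        have hx1 := helt x hx
        have hx2 := helt x' hx'
        have hxx : x' = x + 1 := by omega
        exact hnc x (mem_of_mem_erase hx) (hxx ▸ mem_of_mem_erase hx')
    · -- backward maps into source
      intro M hM
      simp only [mem_filter, mem_powerset] at hM ⊢
      obtain ⟨hsub, hnc⟩ := hM
      have helt : ∀ y ∈ M.image (· + 1), 1 ≤ y ∧ y ≤ m := by
        intro y hy
        obtain ⟨x, hx, rfl⟩ := mem_image.mp hy
        have := mem_range.mp (hsub hx)
        omega
      refine ⟨⟨?_, ?_, ?_⟩, mem_insert_self _ _⟩
      · intro x hx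
        rcases mem_insert.mp hx with rfl | hx
        · exact mem_range.mpr (by omega)
        · have := helt x hx; exact mem_range.mpr (by omega)
      · intro i hi hc
        rcases mem_insert.mp hi with rfl | hi
        · rcases mem_insert.mp hc with h | h
          · omega
          · have := helt _ h; omega
        · rcases mem_insert.mp hc with h | h
          · have := helt i hi; omega
          · obtain ⟨x, hx, rfl⟩ := mem_image.mp hi
            obtain ⟨x', hx', hx'e⟩ := mem_image.mp h
            have hxx : x' = x + 1 := by omega
            exact hnc x hx (hxx ▸ hx')
      · intro hmem h0
        rcases mem_insert.mp h0 with h | h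
        · omega
        · have := helt _ h; omega
    · -- left inverse : back (forward M) = M
      intro M hM
      simp only [mem_filter, mem_powerset] at hM
      obtain ⟨⟨hsub, hnc, hwrap⟩, hmem⟩ := hM
      have h0 : (0:ℕ) ∉ M := hwrap (by simpa using hmem)
      have h1 : ∀ x ∈ M.erase (m+2), 1 ≤ x := by
        intro x hx
        have hxM := mem_of_mem_erase hx
        have : x ≠ 0 := fun h => h0 (h ▸ hxM)
        omega
      rw [image_sub_add h1, insert_erase hmem]
    · -- right inverse : forward (back M) = M
      intro M hM
      simp only [mem_filter, mem_powerset] at hM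
      obtain ⟨hsub, hnc⟩ := hM
      have hni : m + 2 ∉ M.image (· + 1) := by
        intro hc
        obtain ⟨x, hx, hxe⟩ := mem_image.mp hc
        have := mem_range.mp (hsub hx); omega
      rw [erase_insert hni, image_add_sub]
    · -- weights
      intro M hM
      simp only [mem_filter, mem_powerset] at hM
      obtain ⟨⟨hsub, hnc, hwrap⟩, hmem⟩ := hM
      have h0 : (0:ℕ) ∉ M := hwrap (by simpa using hmem)
      have hinj : Set.InjOn (· - 1) ↑(M.erase (m+2)) := by
        intro a ha b hb hab
        simp only [Finset.coe_erase, Set.mem_diff, Finset.mem_coe] at ha hb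
        have ha1 : a ≠ 0 := fun h => h0 (h ▸ ha.1)
        have hb1 : b ≠ 0 := fun h => h0 (h ▸ hb.1)
        simp only at hab
        omega
      rw [Finset.card_image_of_injOn hinj, card_erase_of_mem hmem]
      have hcard : 1 ≤ M.card := card_pos.mpr ⟨_, hmem⟩
      have hle : 2 * M.card ≤ m + 4 := nonconsec_card_le hsub hnc
      have hle2 : 2 * M.card ≤ m + 3 := nonconsec_card_le' hsub hnc h0
      obtain ⟨k, hk⟩ : ∃ k, M.card = k + 1 := ⟨M.card - 1, by omega⟩
      rw [hk, show k + 1 - 1 = k by omega,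
        show m + 3 - 2 * (k+1) = m + 1 - 2 * k by omega, pow_succ]
      ring

lemma E_formula (p : ℝ) : ∀ m : ℕ,
    Apath p (m + 2) + p * Apath p m = 1 + (-p) ^ (m + 3) ∧
    Apath p (m + 3) + p * Apath p (m + 1) = 1 + (-p) ^ (m + 4) := by
  intro m
  induction m with
  | zero =>
    constructor
    · rw [show (0:ℕ)+2 = 2 from rfl, Apath_succ_succ, Apath_zero, Apath_one]
      ring
    · rw [show (0:ℕ)+3 = 1+2 from rfl, Apath_succ_succ, Apath_succ_succ,
        Apath_zero, Apath_one]
      ring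
  | succ k ih =>
    obtain ⟨ih1, ih2⟩ := ih
    refine ⟨ih2, ?_⟩
    have h1 : Apath p (k + 4) = (1 - p) * Apath p (k + 3) + p * Apath p (k + 2) :=
      Apath_succ_succ p (k + 2)
    have h2 : Apath p (k + 2) = (1 - p) * Apath p (k + 1) + p * Apath p k :=
      Apath_succ_succ p k
    have key : Apath p (k + 4) + p * Apath p (k + 2)
        = (1 - p) * (Apath p (k + 3) + p * Apath p (k + 1))
          + p * (Apath p (k + 2) + p * Apath p k) := by
      rw [h1]; nth_rewrite 2 [h2]; ring
    rw [key, ih1, ih2]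
    rw [show k + 1 + 4 = (k + 4) + 1 from rfl, show k + 4 = (k + 3) + 1 from rfl,
      pow_succ, pow_succ]
    ring

lemma Ccyc_closed (p : ℝ) (n : ℕ) (hn : 3 ≤ n) : Ccyc p n = 1 + (-p) ^ n := by
  obtain ⟨m, rfl⟩ : ∃ m, n = m + 3 := ⟨n - 3, by omega⟩
  rw [Ccyc_eq]
  exact (E_formula p m).1

lemma zmod_cycle_sum (n : ℕ) [NeZero n] (hn : 3 ≤ n) (p : ℝ) :
    ∑ M ∈ Finset.univ.filter (fun M : Finset (ZMod n) => ∀ i ∈ M, i + 1 ∉ M),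
      p ^ M.card * (1 - p) ^ (n - 2 * M.card) = 1 + (-p) ^ n := by
  classical
  rw [← Ccyc_closed p n hn, Ccyc]
  apply Finset.sum_nbij' (fun M => M.image ZMod.val)
    (fun M' => M'.image (fun x : ℕ => (x : ZMod n)))
  · -- forward into target
    intro M hM
    simp only [mem_filter, mem_powerset, Finset.mem_univ, true_and] at hM ⊢
    refine ⟨?_, ?_, ?_⟩
    · intro y hy
      obtain ⟨a, ha, rfl⟩ := mem_image.mp hy
      exact mem_range.mpr (ZMod.val_lt a)
    · intro y hy hc
      obtain ⟨a, ha, rfl⟩ := mem_image.mp hy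
      obtain ⟨b, hb, hbe⟩ := mem_image.mp hc
      have hblt : b.val < n := ZMod.val_lt b
      have hba : b = a + 1 := by
        have h1 : ((b.val : ℕ) : ZMod n) = b := ZMod.natCast_rightInverse b
        have h2 : ((a.val : ℕ) : ZMod n) = a := ZMod.natCast_rightInverse a
        rw [← h1, hbe, Nat.cast_add, Nat.cast_one, h2]
      exact hM a ha (hba ▸ hb)
    · intro hy hc
      obtain ⟨a, ha, hae⟩ := mem_image.mp hy
      obtain ⟨b, hb, hbe⟩ := mem_image.mp hc
      have hba : b = a + 1 := by
        have h1 : ((b.val : ℕ) : ZMod n) = b := ZMod.natCast_rightInverse b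
        have h2 : ((a.val : ℕ) : ZMod n) = a := ZMod.natCast_rightInverse a
        rw [← h1, hbe, ← h2, hae]
        rw [Nat.cast_zero, ← Nat.cast_one (R := ZMod n), ← Nat.cast_add,
          show n - 1 + 1 = n by omega, ZMod.natCast_self]
      exact hM a ha (hba ▸ hb)
  · -- backward into source
    intro M' hM'
    simp only [mem_filter, mem_powerset, Finset.mem_univ, true_and] at hM' ⊢
    obtain ⟨hsub, hnc, hwrap⟩ := hM'
    intro i hi hc
    obtain ⟨x, hx, rfl⟩ := mem_image.mp hi
    obtain ⟨y, hy, hye⟩ := mem_image.mp hc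
    have hxlt := mem_range.mp (hsub hx)
    have hylt := mem_range.mp (hsub hy)
    have hmod : (y : ZMod n) = ((x + 1 : ℕ) : ZMod n) := by push_cast; rw [hye]
    have hcong : y % n = (x + 1) % n := (ZMod.natCast_eq_natCast_iff _ _ _).mp hmod
    rcases Nat.lt_or_ge (x + 1) n with h | h
    · rw [Nat.mod_eq_of_lt hylt, Nat.mod_eq_of_lt h] at hcong
      exact hnc x hx (hcong ▸ hy)
    · have hxn : x + 1 = n := by omega
      rw [Nat.mod_eq_of_lt hylt, hxn, Nat.mod_self] at hcong
      have hx' : x = n - 1 := by omega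
      exact hwrap (hx' ▸ hx) (hcong ▸ hy)
  · -- left inverse
    intro M hM
    rw [Finset.image_image]
    have : ∀ a ∈ M, ((fun x : ℕ => (x : ZMod n)) ∘ ZMod.val) a = id a := by
      intro a ha
      simp only [Function.comp_apply, id_eq]
      exact ZMod.natCast_rightInverse a
    rw [Finset.image_congr this, Finset.image_id]
  · -- right inverse
    intro M' hM'
    simp only [mem_filter, mem_powerset] at hM'
    rw [Finset.image_image]
    have : ∀ x ∈ M', (ZMod.val ∘ (fun x : ℕ => (x : ZMod n))) x = id x := by
      intro x hx
      simp only [Function.comp_apply, id_eq]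
      exact ZMod.val_cast_of_lt (mem_range.mp (hM'.1 hx))
    rw [Finset.image_congr this, Finset.image_id]
  · -- weights
    intro M hM
    rw [Finset.card_image_of_injective _ (ZMod.val_injective n)]

lemma zmod_nonconsec_card (n : ℕ) [NeZero n] {s : Finset (ZMod n)}
    (h : ∀ b ∈ s, b + 1 ∉ s) : 2 * s.card ≤ n := by
  have hdisj : Disjoint s (s.image (· + 1)) := by
    rw [Finset.disjoint_right]
    rintro x hx hxs
    obtain ⟨b, hb, rfl⟩ := mem_image.mp hx
    exact h b hb hxs
  have h1 := card_le_card (subset_univ (s ∪ s.image (· + 1)))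
  rw [card_union_of_disjoint hdisj,
    card_image_of_injective _ (add_left_injective (1 : ZMod n)),
    card_univ, ZMod.card] at h1
  omega

set_option maxHeartbeats 3200000 in
theorem stmt6 (N j : ℕ) [NeZero N] (hj : 0 < j) (hjN : j < N) (p : ℝ)
    (hg : 2 < N / Nat.gcd N j) :
    ∑ M ∈ Finset.univ.filter (fun M : Finset (ZMod N) =>
        ∀ i ∈ M, ∀ i' ∈ M, i ≠ i' →
          i' ≠ i + (j : ZMod N) ∧ i ≠ i' + (j : ZMod N)),
      p ^ M.card * (1 - p) ^ (N - 2 * M.card)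
    = (1 + (-p) ^ (N / Nat.gcd N j)) ^ Nat.gcd N j := by
  classical
  set g := Nat.gcd N j with hgdef
  set n := N / g with hndef
  have hNpos : 0 < N := Nat.pos_of_ne_zero (NeZero.ne N)
  have hgpos : 0 < g := Nat.gcd_pos_of_pos_left _ hNpos
  have hgN : g ∣ N := Nat.gcd_dvd_left N j
  have hgj : g ∣ j := Nat.gcd_dvd_right N j
  have hN : N = g * n := (Nat.mul_div_cancel' hgN).symm
  have hn3 : 3 ≤ n := hg
  haveI : NeZero n := ⟨by omega⟩
  obtain ⟨j', hj'⟩ := hgj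
  have hgj : g ∣ j := ⟨j', hj'⟩
  have hcop : Nat.Coprime n j' := by
    have h := Nat.coprime_div_gcd_div_gcd (m := N) (n := j) hgpos
    have hj'2 : j' = j / Nat.gcd N j := by
      rw [← hgdef, hj', Nat.mul_div_cancel_left _ hgpos]
    rw [hj'2]
    exact h
  have hjz : (j : ZMod N) ≠ 0 := by
    rw [Ne, ZMod.natCast_eq_zero_iff]
    intro h
    exact absurd (Nat.le_of_dvd hj h) (by omega)
  -- simplify the condition
  have hcond : ∀ M : Finset (ZMod N),
      (∀ i ∈ M, ∀ i' ∈ M, i ≠ i' → i' ≠ i + (j : ZMod N) ∧ i ≠ i' + (j : ZMod N))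
      ↔ (∀ i ∈ M, i + (j : ZMod N) ∉ M) := by
    intro M
    constructor
    · intro h i hi hc
      have hne : i ≠ i + (j : ZMod N) := by
        intro he
        exact hjz (by linear_combination -he)
      exact (h i hi _ hc hne).1 rfl
    · intro h i hi i' hi' hne
      exact ⟨fun hc => h i hi (hc ▸ hi'), fun hc => h i' hi' (hc ▸ hi)⟩
  rw [show (Finset.univ.filter (fun M : Finset (ZMod N) =>
        ∀ i ∈ M, ∀ i' ∈ M, i ≠ i' →
          i' ≠ i + (j : ZMod N) ∧ i ≠ i' + (j : ZMod N)))
      = Finset.univ.filter (fun M : Finset (ZMod N) => ∀ i ∈ M, i + (j : ZMod N) ∉ M) from by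
    ext M
    simp only [mem_filter, and_congr_right_iff]
    exact fun _ => hcond M]
  -- the bijection f : Fin g × ZMod n → ZMod N
  set f : Fin g × ZMod n → ZMod N :=
    fun x => (((x.1 : ℕ) + x.2.val * j : ℕ) : ZMod N) with hfdef
  have hinj : Function.Injective f := by
    rintro ⟨a, b⟩ ⟨a', b'⟩ he
    simp only [hfdef] at he
    have hmod := (ZMod.natCast_eq_natCast_iff _ _ _).mp he
    have hdvd : (N : ℤ) ∣ ((a' : ℕ) + b'.val * j : ℕ) - ((a : ℕ) + b.val * j : ℕ) :=
      hmod.dvd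
    have hga : (g : ℤ) ∣ ((a' : ℕ) : ℤ) - ((a : ℕ) : ℤ) := by
      have h1 : (g : ℤ) ∣ (N : ℤ) := Int.natCast_dvd_natCast.mpr hgN
      have h2 : (g : ℤ) ∣ (j : ℤ) := Int.natCast_dvd_natCast.mpr hgj
      have h3 := h1.trans hdvd
      push_cast at h3 ⊢
      obtain ⟨c, hc⟩ := h2
      obtain ⟨d, hd⟩ := h3
      refine ⟨d - (b' : ZMod n).val * c + (b : ZMod n).val * c, ?_⟩
      linear_combination hd - (((b':ZMod n).val : ℤ) - ((b:ZMod n).val : ℤ)) * hc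
    have haa : a = a' := by
      have h1 : ((a' : ℕ) : ℤ) - ((a : ℕ) : ℤ) = 0 := by
        have hb1 : ((a : ℕ) : ℤ) < g := by exact_mod_cast a.2
        have hb2 : ((a' : ℕ) : ℤ) < g := by exact_mod_cast a'.2
        rcases hga with ⟨c, hc⟩
        have hc0 : c = 0 := by
          rcases lt_trichotomy c 0 with h' | h' | h'
          · have h1 : c ≤ -1 := by omega
            have hb0 : (0:ℤ) ≤ ((a : ℕ) : ℤ) := Int.natCast_nonneg _
            have hb0' : (0:ℤ) ≤ ((a' : ℕ) : ℤ) := Int.natCast_nonneg _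
            have hgz : (0:ℤ) < g := by exact_mod_cast hgpos
            nlinarith
          · exact h'
          · have h1 : 1 ≤ c := by omega
            have hb0 : (0:ℤ) ≤ ((a : ℕ) : ℤ) := Int.natCast_nonneg _
            have hb0' : (0:ℤ) ≤ ((a' : ℕ) : ℤ) := Int.natCast_nonneg _
            have hgz : (0:ℤ) < g := by exact_mod_cast hgpos
            nlinarith
        rw [hc0, mul_zero] at hc
        omega
      have : (a : ℕ) = (a' : ℕ) := by omega
      exact Fin.ext this
    subst haa
    have hbb : (n : ℤ) ∣ ((b'.val : ℤ) - (b.val : ℤ)) * j' := by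
      have h4 : (N : ℤ) ∣ ((b'.val : ℤ) - (b.val : ℤ)) * j := by
        push_cast at hdvd
        convert hdvd using 1
        ring
      rw [hN, hj'] at h4
      push_cast at h4
      have h5 : (g : ℤ) * (n : ℤ) ∣ (g : ℤ) * (((b'.val : ℤ) - (b.val : ℤ)) * j') := by
        convert h4 using 1
        ring
      exact (mul_dvd_mul_iff_left (by exact_mod_cast hgpos.ne' : (g:ℤ) ≠ 0)).mp h5
    have hcop' : IsCoprime (n : ℤ) (j' : ℤ) := by
      rw [Int.isCoprime_iff_gcd_eq_one]
      exact_mod_cast hcop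
    have h6 : (n : ℤ) ∣ (b'.val : ℤ) - (b.val : ℤ) :=
      hcop'.dvd_of_dvd_mul_right hbb
    have hbv : b.val = b'.val := by
      have hb1 : (b.val : ℤ) < n := by exact_mod_cast b.val_lt
      have hb2 : (b'.val : ℤ) < n := by exact_mod_cast b'.val_lt
      rcases h6 with ⟨c, hc⟩
      have hc0 : c = 0 := by
        rcases lt_trichotomy c 0 with h' | h' | h'
        · have h1 : c ≤ -1 := by omega
          have hb0 : (0:ℤ) ≤ (b.val : ℤ) := Int.natCast_nonneg _
          have hb0' : (0:ℤ) ≤ (b'.val : ℤ) := Int.natCast_nonneg _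
          have hgz : (0:ℤ) < n := by exact_mod_cast (by omega : 0 < n)
          nlinarith
        · exact h'
        · have h1 : 1 ≤ c := by omega
          have hb0 : (0:ℤ) ≤ (b.val : ℤ) := Int.natCast_nonneg _
          have hb0' : (0:ℤ) ≤ (b'.val : ℤ) := Int.natCast_nonneg _
          have hgz : (0:ℤ) < n := by exact_mod_cast (by omega : 0 < n)
          nlinarith
      rw [hc0, mul_zero] at hc
      omega
    exact Prod.ext rfl (ZMod.val_injective n hbv)
  have hbij : Function.Bijective f := by
    rw [Fintype.bijective_iff_injective_and_card]
    refine ⟨hinj, ?_⟩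
    rw [Fintype.card_prod, Fintype.card_fin, ZMod.card, ZMod.card, hN]
  set e : (Fin g × ZMod n) ≃ ZMod N := Equiv.ofBijective f hbij with hedef
  have hef : ∀ x, e x = f x := fun x => rfl
  -- adjacency
  have hnjzero : ((n * j : ℕ) : ZMod N) = 0 := by
    rw [ZMod.natCast_eq_zero_iff, hN, hj']
    exact ⟨j', by ring⟩
  have hadj : ∀ (a : Fin g) (b : ZMod n), f (a, b + 1) = f (a, b) + (j : ZMod N) := by
    intro a b
    simp only [hfdef]
    have hval : (b + 1).val = (b.val + 1) % n := by
      rw [ZMod.val_add, ZMod.val_one_eq_one_mod]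
      rw [Nat.mod_eq_of_lt (show (1:ℕ) < n by omega)]
    rw [hval]
    have hmod : (((b.val + 1) % n : ℕ) : ZMod N) * (j : ZMod N)
        = ((b.val + 1 : ℕ) : ZMod N) * (j : ZMod N) := by
      conv_rhs => rw [show b.val + 1 = n * ((b.val + 1) / n) + (b.val + 1) % n from
        (Nat.div_add_mod _ _).symm]
      push_cast
      rw [show ((n:ZMod N) * (((b.val+1)/n : ℕ) : ZMod N) + (((b.val+1) % n : ℕ) : ZMod N))
          * (j : ZMod N)
          = ((n : ZMod N) * (j : ZMod N)) * (((b.val+1)/n : ℕ) : ZMod N)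
            + (((b.val+1) % n : ℕ) : ZMod N) * (j : ZMod N) by ring]
      have : (n : ZMod N) * (j : ZMod N) = 0 := by
        have := hnjzero
        push_cast at this
        exact this
      rw [this, zero_mul, zero_add]
    push_cast
    push_cast at hmod
    linear_combination hmod
  -- factorize the sum over fibers
  set S : Finset (Finset (ZMod n)) :=
    Finset.univ.filter (fun s : Finset (ZMod n) => ∀ b ∈ s, b + 1 ∉ s) with hSdef
  have hrhs : (1 + (-p) ^ n) ^ g
      = ∑ h ∈ Fintype.piFinset (fun _ : Fin g => S),
          ∏ a : Fin g, (p ^ (h a).card * (1 - p) ^ (n - 2 * (h a).card)) := by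
    calc (1 + (-p) ^ n) ^ g
        = ∏ _a : Fin g, (1 + (-p) ^ n) := by
          rw [Finset.prod_const, card_univ, Fintype.card_fin]
      _ = ∏ _a : Fin g, ∑ s ∈ S, p ^ s.card * (1 - p) ^ (n - 2 * s.card) := by
          rw [zmod_cycle_sum n hn3 p]
      _ = _ := Finset.prod_univ_sum _ _
  rw [hrhs]
  apply Finset.sum_nbij'
    (fun M => fun a : Fin g => Finset.univ.filter (fun b : ZMod n => f (a, b) ∈ M))
    (fun h => Finset.univ.filter (fun x : ZMod N => (e.symm x).2 ∈ h (e.symm x).1))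
  · -- forward membership
    intro M hM
    simp only [mem_filter, Finset.mem_univ, true_and] at hM
    rw [Fintype.mem_piFinset]
    intro a
    simp only [hSdef, mem_filter, Finset.mem_univ, true_and]
    intro b hb hc
    rw [hadj a b] at hc
    exact hM _ hb hc
  · -- backward membership
    intro h hh
    rw [Fintype.mem_piFinset] at hh
    simp only [mem_filter, Finset.mem_univ, true_and]
    intro x hx hc
    obtain ⟨a, b, hab⟩ : ∃ a b, e.symm x = (a, b) := ⟨(e.symm x).1, (e.symm x).2, rfl⟩
    have hxe : x = f (a, b) := by
      have := (Equiv.symm_apply_eq e).mp hab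
      rw [this, hef]
    have hxj : e.symm (x + (j : ZMod N)) = (a, b + 1) := by
      rw [hxe, ← hadj a b, ← hef, Equiv.symm_apply_apply]
    rw [hab] at hx
    rw [hxj] at hc
    have hS := hh a
    simp only [hSdef, mem_filter, Finset.mem_univ, true_and] at hS
    exact hS b hx hc
  · -- left inverse
    intro M hM
    ext x
    simp only [mem_filter, Finset.mem_univ, true_and]
    have hfe : f ((e.symm x).1, (e.symm x).2) = x := by
      rw [← hef]
      exact e.apply_symm_apply x
    rw [hfe]
  · -- right inverse
    intro h hh
    funext a
    ext b
    simp only [mem_filter, Finset.mem_univ, true_and]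
    rw [show f (a, b) = e (a, b) from rfl, Equiv.symm_apply_apply]
  · -- weights
    intro M hM
    simp only [mem_filter, Finset.mem_univ, true_and] at hM
    have hcond2 : ∀ a : Fin g, ∀ b ∈ Finset.univ.filter (fun b : ZMod n => f (a, b) ∈ M),
        b + 1 ∉ Finset.univ.filter (fun b : ZMod n => f (a, b) ∈ M) := by
      intro a b hb hc
      simp only [mem_filter, Finset.mem_univ, true_and] at hb hc
      rw [hadj a b] at hc
      exact hM _ hb hc
    have hcardle : ∀ a : Fin g,
        2 * (Finset.univ.filter (fun b : ZMod n => f (a, b) ∈ M)).card ≤ n :=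
      fun a => zmod_nonconsec_card n (hcond2 a)
    have hsum : ∑ a : Fin g, (Finset.univ.filter (fun b : ZMod n => f (a, b) ∈ M)).card
        = M.card := by
      calc ∑ a : Fin g, (Finset.univ.filter (fun b : ZMod n => f (a, b) ∈ M)).card
          = ∑ a : Fin g, ∑ b : ZMod n, if f (a, b) ∈ M then 1 else 0 := by
            refine Finset.sum_congr rfl fun a _ => ?_
            rw [Finset.card_filter]
        _ = ∑ x : Fin g × ZMod n, if f x ∈ M then 1 else 0 := by
            rw [Fintype.sum_prod_type]
        _ = ∑ y : ZMod N, if y ∈ M then 1 else 0 :=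
            Fintype.sum_equiv e _ _ (fun x => rfl)
        _ = M.card := by
            rw [← Finset.card_filter, Finset.filter_univ_mem]
    rw [Finset.prod_mul_distrib, Finset.prod_pow_eq_pow_sum, Finset.prod_pow_eq_pow_sum]
    rw [hsum]
    congr 1
    rw [Finset.sum_tsub_distrib _ (fun a _ => hcardle a)]
    rw [Finset.sum_const, card_univ, Fintype.card_fin, ← Finset.mul_sum, hsum]
    rw [smul_eq_mul, ← hN]
end
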